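/- arXiv:1803.02932 — 3 statements merged into one kernel-verified Lean document; each statement's English description precedes it below -/
import Mathlib

section
/- Suppose (e_n) is w-semi-greedy and 0 < inf w_n ≤ sup w_n < ∞. Then there exists M < ∞ such that for all finite A and scalars (a_n)_{n∈A}: (min_{n∈A} |a_n|) · ||Σ_{n∈A} e_n|| ≤ M ||Σ_{n∈A} a_n e_n||. -/
open Finset Filter

section Defs

variable {X : Type*} [NormedAddCommGroup X] [NormedSpace ℝ X]

/-- `wsum w A` is the `w`-measure of the finite set `A`. -/
def wsum (w : ℕ → ℝ) (A : Finset ℕ) : ℝ := ∑ i ∈ A, w i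

/-- `e` is a normalized (Schauder) basis with biorthogonal functionals `E`. -/
def NormalizedBasis (e : ℕ → X) (E : ℕ → X →L[ℝ] ℝ) : Prop :=
  (∀ n, ‖e n‖ = 1) ∧ (∀ n m, E n (e m) = if n = m then (1:ℝ) else 0) ∧
  ∀ x : X, Filter.Tendsto (fun N => ∑ n ∈ Finset.range N, E n x • e n)
    Filter.atTop (nhds x)

/-- `Λ` is a greedy set for `x`: every coefficient inside dominates every one outside. -/
def GreedySet (E : ℕ → X →L[ℝ] ℝ) (x : X) (Λ : Finset ℕ) : Prop :=
  ∀ n ∈ Λ, ∀ k, k ∉ Λ → |E k x| ≤ |E n x|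

/-- quasi-greedy with constant `K`. -/
def QuasiGreedy (e : ℕ → X) (E : ℕ → X →L[ℝ] ℝ) (K : ℝ) : Prop :=
  ∀ (x : X) (Λ : Finset ℕ), GreedySet E x Λ → ‖∑ n ∈ Λ, E n x • e n‖ ≤ K * ‖x‖

/-- `w`-almost greedy with constant `K`. -/
def WAlmostGreedy (w : ℕ → ℝ) (e : ℕ → X) (E : ℕ → X →L[ℝ] ℝ) (K : ℝ) : Prop :=
  ∀ (x : X) (Λ : Finset ℕ), GreedySet E x Λ →
    ∀ A : Finset ℕ, wsum w A ≤ wsum w Λ →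
      ‖x - ∑ n ∈ Λ, E n x • e n‖ ≤ K * ‖x - ∑ n ∈ A, E n x • e n‖

/-- `w`-democratic with constant `D`. -/
def WDemocratic (w : ℕ → ℝ) (e : ℕ → X) (D : ℝ) : Prop :=
  ∀ A B : Finset ℕ, wsum w A ≤ wsum w B →
    ‖∑ n ∈ A, e n‖ ≤ D * ‖∑ n ∈ B, e n‖

/-- best `m`-term (weighted) approximation error. -/
noncomputable def sigmaW (w : ℕ → ℝ) (e : ℕ → X) (u : ℝ) (x : X) : ℝ :=
  sInf {r | ∃ (A : Finset ℕ) (c : ℕ → ℝ), wsum w A ≤ u ∧ r = ‖x - ∑ n ∈ A, c n • e n‖}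

/-- expansional best (weighted) approximation error. -/
noncomputable def sigmaTildeW (w : ℕ → ℝ) (e : ℕ → X) (E : ℕ → X →L[ℝ] ℝ)
    (u : ℝ) (x : X) : ℝ :=
  sInf {r | ∃ A : Finset ℕ, wsum w A ≤ u ∧ r = ‖x - ∑ n ∈ A, E n x • e n‖}

/-- weighted fundamental function `φ^w`. -/
noncomputable def phiW (w : ℕ → ℝ) (e : ℕ → X) (u : ℝ) : ℝ :=
  sSup {r | ∃ A : Finset ℕ, wsum w A ≤ u ∧ r = ‖∑ n ∈ A, e n‖}

/-- the companion function `φ̂^w`. -/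
noncomputable def phiHatW (w : ℕ → ℝ) (e : ℕ → X) (v : ℝ) : ℝ :=
  sInf {r | ∃ A : Finset ℕ, v < wsum w A ∧ r = ‖∑ n ∈ A, e n‖}

/-- `w`-semi-greedy with constant `K`: some Chebyshev approximant on each greedy set
realizes the bound. -/
def WSemiGreedy (w : ℕ → ℝ) (e : ℕ → X) (E : ℕ → X →L[ℝ] ℝ) (K : ℝ) : Prop :=
  ∀ (x : X) (Λ : Finset ℕ), GreedySet E x Λ →
    ∃ c : ℕ → ℝ, ‖x - ∑ n ∈ Λ, c n • e n‖ ≤ K * sigmaW w e (wsum w Λ) x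

/-- a sequence of signs. -/
def SignVec (ε : ℕ → ℝ) : Prop := ∀ n, ε n = 1 ∨ ε n = -1

/-- `w`-superdemocratic with constant `D`. -/
def WSuperDemocratic (w : ℕ → ℝ) (e : ℕ → X) (D : ℝ) : Prop :=
  ∀ A B : Finset ℕ, wsum w A ≤ wsum w B → ∀ ε δ : ℕ → ℝ, SignVec ε → SignVec δ →
    ‖∑ n ∈ A, ε n • e n‖ ≤ D * ‖∑ n ∈ B, δ n • e n‖

/-- `β` bounds the partial-sum projections (basis constant bound). -/
def BasisConstBound (e : ℕ → X) (E : ℕ → X →L[ℝ] ℝ) (β : ℝ) : Prop :=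
  ∀ (x : X) (N : ℕ), ‖∑ n ∈ Finset.range N, E n x • e n‖ ≤ β * ‖x‖

/-- equivalence to the unit vector basis of `c₀`. -/
def EquivC0 (e : ℕ → X) : Prop :=
  ∃ c C : ℝ, 0 < c ∧ ∀ (A : Finset ℕ) (a : ℕ → ℝ),
    (∀ n ∈ A, c * |a n| ≤ ‖∑ m ∈ A, a m • e m‖) ∧
    (∀ M : ℝ, (∀ n ∈ A, |a n| ≤ M) → ‖∑ n ∈ A, a n • e n‖ ≤ C * M)

/-- conservative with constant `C`. -/
def Conservative (e : ℕ → X) (C : ℝ) : Prop :=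
  ∀ A B : Finset ℕ, A.card ≤ B.card → (∀ a ∈ A, ∀ b ∈ B, a < b) →
    ‖∑ n ∈ A, e n‖ ≤ C * ‖∑ n ∈ B, e n‖

/-- `X` has finite cotype. -/
def FiniteCotype (X : Type*) [NormedAddCommGroup X] [NormedSpace ℝ X] : Prop :=
  ∃ (q C : ℝ), 2 ≤ q ∧ 0 < C ∧ ∀ (n : ℕ) (x : Fin n → X),
    (∑ j, ‖x j‖ ^ q) ^ (1/q) ≤
      C * ((∑ ε : Fin n → Bool,
        ‖∑ j, (if ε j then (1:ℝ) else -1) • x j‖ ^ q) / 2 ^ n) ^ (1/q)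

end Defs

/-!
Let `s = ∑_{n∈A} aₙ eₙ` with `|aₙ| ≥ c` on `A`, and let `D = [N, N + m]` be a block of
indices after `A` whose weight just exceeds that of `A`, so that its initial segment
`D' = [N, N + m)` weighs at most `w(A)`. Semi-greedy approximation of `∑_{A ∪ D} eₙ` on the
greedy set `D`, compared with removing `A`, bounds `‖∑_A eₙ‖` by `βK‖∑_D eₙ‖` after projecting
onto the first `N` coordinates. Semi-greedy approximation of `s + c ∑_{D'} eₙ` on the
greedy set `A`, compared with removing `D'`, bounds `c‖∑_{D'} eₙ‖` by `2βK‖s‖` after projecting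
onto `D'`. The remaining top vector of `D` costs `c ≤ |a_{n₀}| ≤ 2β‖s‖`. The uniform bound `β`
on the partial sum projections comes from the Banach–Steinhaus theorem.
-/

open Topology

section

variable {X : Type*} [NormedAddCommGroup X] [NormedSpace ℝ X] {e : ℕ → X}
  {E : ℕ → X →L[ℝ] ℝ} {w : ℕ → ℝ} {K β : ℝ}

noncomputable def coordProj (e : ℕ → X) (E : ℕ → X →L[ℝ] ℝ) (T : Finset ℕ) : X →L[ℝ] X :=
  ∑ n ∈ T, (E n).smulRight (e n)

@[simp]
lemma coordProj_apply (T : Finset ℕ) (x : X) :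
    coordProj e E T x = ∑ n ∈ T, E n x • e n := by
  simp [coordProj]

lemma coord_sum_smul (hbio : ∀ n m, E n (e m) = if n = m then (1 : ℝ) else 0)
    (S : Finset ℕ) (b : ℕ → ℝ) (k : ℕ) :
    E k (∑ n ∈ S, b n • e n) = if k ∈ S then b k else 0 := by
  simp [map_sum, hbio]

lemma coordProj_sum_smul (hbio : ∀ n m, E n (e m) = if n = m then (1 : ℝ) else 0)
    (T S : Finset ℕ) (b : ℕ → ℝ) :
    coordProj e E T (∑ n ∈ S, b n • e n) = ∑ n ∈ T ∩ S, b n • e n := by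
  simp only [coordProj_apply, coord_sum_smul hbio, ite_smul, zero_smul, sum_ite_mem]

lemma coordProj_sum_smul_of_subset (hbio : ∀ n m, E n (e m) = if n = m then (1 : ℝ) else 0)
    {S T : Finset ℕ} (hST : S ⊆ T) (b : ℕ → ℝ) :
    coordProj e E T (∑ n ∈ S, b n • e n) = ∑ n ∈ S, b n • e n := by
  rw [coordProj_sum_smul hbio, inter_eq_right.mpr hST]

lemma coordProj_sum_smul_of_disjoint (hbio : ∀ n m, E n (e m) = if n = m then (1 : ℝ) else 0)
    {S T : Finset ℕ} (hTS : Disjoint T S) (b : ℕ → ℝ) :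
    coordProj e E T (∑ n ∈ S, b n • e n) = 0 := by
  rw [coordProj_sum_smul hbio, disjoint_iff_inter_eq_empty.mp hTS, sum_empty]

lemma greedySet_sum_smul_add_sum_smul (hbio : ∀ n m, E n (e m) = if n = m then (1 : ℝ) else 0)
    {A B : Finset ℕ} (hAB : Disjoint A B) {a d : ℕ → ℝ}
    (hda : ∀ n ∈ A, ∀ k ∈ B, |d k| ≤ |a n|) :
    GreedySet E (∑ n ∈ A, a n • e n + ∑ n ∈ B, d n • e n) A := by
  intro n hn k hk
  have hnB : n ∉ B := disjoint_left.mp hAB hn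
  simp only [map_add, coord_sum_smul hbio, hn, hnB, hk, if_true, if_false, add_zero, zero_add]
  split_ifs with hkB
  · exact hda n hn k hkB
  · simp

lemma exists_basisConstBound [CompleteSpace X]
    (hconv : ∀ x, Tendsto (fun N => ∑ n ∈ range N, E n x • e n) atTop (𝓝 x)) :
    ∃ β, 0 ≤ β ∧ BasisConstBound e E β := by
  obtain ⟨β, hβ⟩ : ∃ β, ∀ N, ‖coordProj e E (range N)‖ ≤ β := by
    refine banach_steinhaus fun x => ?_
    obtain ⟨C, hC⟩ := (hconv x).norm.bddAbove_range
    exact ⟨C, fun N => by simpa using hC ⟨N, rfl⟩⟩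
  refine ⟨β, (norm_nonneg _).trans (hβ 0), fun x N => ?_⟩
  simpa using (coordProj e E (range N)).le_of_opNorm_le (hβ N) x

namespace BasisConstBound

lemma norm_coordProj_range_le (hβ : BasisConstBound e E β) (N : ℕ) (x : X) :
    ‖coordProj e E (range N) x‖ ≤ β * ‖x‖ := by
  simpa using hβ x N

lemma norm_coordProj_Ico_le (hβ : BasisConstBound e E β) {M N : ℕ} (hMN : M ≤ N) (x : X) :
    ‖coordProj e E (Ico M N) x‖ ≤ 2 * β * ‖x‖ := by
  rw [coordProj_apply, sum_Ico_eq_sub _ hMN]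
  linarith [norm_sub_le (∑ n ∈ range N, E n x • e n) (∑ n ∈ range M, E n x • e n),
    hβ x N, hβ x M]

lemma abs_coord_le (hβ : BasisConstBound e E β) {k : ℕ} (hk : ‖e k‖ = 1) (x : X) :
    |E k x| ≤ 2 * β * ‖x‖ := by
  simpa [norm_smul, hk] using hβ.norm_coordProj_Ico_le k.le_succ x

end BasisConstBound

lemma sigmaW_nonneg (u : ℝ) (x : X) : 0 ≤ sigmaW w e u x :=
  Real.sInf_nonneg (by rintro r ⟨A, c, -, rfl⟩; positivity)

lemma sigmaW_le {u : ℝ} (x : X) {B : Finset ℕ} (hB : wsum w B ≤ u) (d : ℕ → ℝ) :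
    sigmaW w e u x ≤ ‖x - ∑ n ∈ B, d n • e n‖ :=
  csInf_le ⟨0, by rintro r ⟨A, c, -, rfl⟩; positivity⟩ ⟨B, d, hB, rfl⟩

lemma disjoint_range_Ico (N M : ℕ) : Disjoint (range N) (Ico N M) := by
  rw [range_eq_Ico]
  exact Ico_disjoint_Ico_consecutive 0 N M

lemma exists_le_and_lt_succ {f : ℕ → ℝ} {t : ℝ} (h0 : f 0 ≤ t) (hf : ∃ m, t < f m) :
    ∃ m, f m ≤ t ∧ t < f (m + 1) := by
  classical
  obtain ⟨m, hm⟩ := Nat.exists_eq_add_one_of_ne_zero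
    (fun h : Nat.find hf = 0 => (Nat.find_spec hf).not_ge (h ▸ h0))
  exact ⟨m, not_lt.mp (Nat.find_min hf (hm ▸ m.lt_succ_self)), hm ▸ Nat.find_spec hf⟩

lemma exists_wsum_Ico_le_and_lt {γ : ℝ} (hγ : 0 < γ) (hw : ∀ n, γ ≤ w n) (N : ℕ) {t : ℝ}
    (ht : 0 ≤ t) : ∃ m, wsum w (Ico N (N + m)) ≤ t ∧ t < wsum w (Ico N (N + (m + 1))) := by
  refine exists_le_and_lt_succ (by simpa [wsum] using ht) ?_
  obtain ⟨m, hm⟩ := exists_nat_gt (t / γ)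
  refine ⟨m, (div_lt_iff₀ hγ).mp hm |>.trans_le ?_⟩
  calc (m : ℝ) * γ = #(Ico N (N + m)) • γ := by simp
    _ ≤ wsum w (Ico N (N + m)) := card_nsmul_le_sum _ _ _ fun n _ => hw n

namespace WSemiGreedy

lemma pos [Nontrivial X] (h : WSemiGreedy w e E K) : 0 < K := by
  obtain ⟨x, hx⟩ := exists_ne (0 : X)
  obtain ⟨c, hc⟩ := h x ∅ (by simp [GreedySet])
  have hσ := sigmaW_nonneg (w := w) (e := e) (wsum w ∅) x
  rw [sum_empty, sub_zero] at hc
  by_contra! hK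
  exact hx (norm_le_zero_iff.mp (hc.trans (mul_nonpos_of_nonpos_of_nonneg hK hσ)))

lemma exists_le_of_wsum_le (h : WSemiGreedy w e E K) (hK : 0 ≤ K) {x : X} {Λ B : Finset ℕ}
    (hΛ : GreedySet E x Λ) (hB : wsum w B ≤ wsum w Λ) (d : ℕ → ℝ) :
    ∃ c : ℕ → ℝ, ‖x - ∑ n ∈ Λ, c n • e n‖ ≤ K * ‖x - ∑ n ∈ B, d n • e n‖ := by
  obtain ⟨c, hc⟩ := h x Λ hΛ
  exact ⟨c, hc.trans (mul_le_mul_of_nonneg_left (sigmaW_le x hB d) hK)⟩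

lemma norm_sum_le_of_wsum_le (h : WSemiGreedy w e E K) (hK : 0 ≤ K)
    (hbio : ∀ n m, E n (e m) = if n = m then (1 : ℝ) else 0) (hβ : BasisConstBound e E β)
    (hβ0 : 0 ≤ β) {A D : Finset ℕ} {N : ℕ} (hA : A ⊆ range N) (hD : Disjoint (range N) D)
    (hAD : wsum w A ≤ wsum w D) :
    ‖∑ n ∈ A, e n‖ ≤ β * K * ‖∑ n ∈ D, e n‖ := by
  set one : ℕ → ℝ := fun _ => 1
  have hone : ∀ S : Finset ℕ, ∑ n ∈ S, one n • e n = ∑ n ∈ S, e n := fun S => by simp [one]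
  have hDA : Disjoint D A := hD.symm.mono_right hA
  obtain ⟨c, hc⟩ := h.exists_le_of_wsum_le hK
    (greedySet_sum_smul_add_sum_smul hbio hDA (a := one) (d := one) fun _ _ _ _ => le_rfl) hAD one
  rw [add_sub_cancel_right] at hc
  set y := ∑ n ∈ D, one n • e n + ∑ n ∈ A, one n • e n - ∑ n ∈ D, c n • e n
  rw [hone] at hc
  have hproj : coordProj e E (range N) y = ∑ n ∈ A, e n := by
    rw [map_sub, map_add, coordProj_sum_smul_of_disjoint hbio hD,
      coordProj_sum_smul_of_subset hbio hA, coordProj_sum_smul_of_disjoint hbio hD, hone,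
      zero_add, sub_zero]
  calc ‖∑ n ∈ A, e n‖ = ‖coordProj e E (range N) y‖ := by rw [hproj]
    _ ≤ β * (K * ‖∑ n ∈ D, e n‖) :=
      (hβ.norm_coordProj_range_le N _).trans (mul_le_mul_of_nonneg_left hc hβ0)
    _ = β * K * ‖∑ n ∈ D, e n‖ := by ring

lemma smul_norm_sum_Ico_le (h : WSemiGreedy w e E K) (hK : 0 ≤ K)
    (hbio : ∀ n m, E n (e m) = if n = m then (1 : ℝ) else 0) (hβ : BasisConstBound e E β)
    (hβ0 : 0 ≤ β) {A : Finset ℕ} {a : ℕ → ℝ} {c : ℝ} (hc0 : 0 ≤ c) (hc : ∀ n ∈ A, c ≤ |a n|)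
    {N M : ℕ} (hA : A ⊆ range N) (hNM : N ≤ M) (hw : wsum w (Ico N M) ≤ wsum w A) :
    c * ‖∑ n ∈ Ico N M, e n‖ ≤ 2 * β * K * ‖∑ n ∈ A, a n • e n‖ := by
  set x := ∑ n ∈ A, a n • e n + ∑ n ∈ Ico N M, (fun _ => c) n • e n
  have hIA : Disjoint (Ico N M) A := (disjoint_range_Ico N M).symm.mono_right hA
  obtain ⟨z, hz⟩ := h.exists_le_of_wsum_le hK
    (greedySet_sum_smul_add_sum_smul hbio hIA.symm (a := a) (d := fun _ => c) fun n hn _ _ => by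
      simpa [abs_of_nonneg hc0] using hc n hn) hw fun _ => c
  rw [add_sub_cancel_right] at hz
  have hproj : coordProj e E (Ico N M) (x - ∑ n ∈ A, z n • e n) = c • ∑ n ∈ Ico N M, e n := by
    rw [map_sub, map_add, coordProj_sum_smul_of_disjoint hbio hIA,
      coordProj_sum_smul_of_subset hbio subset_rfl, coordProj_sum_smul_of_disjoint hbio hIA,
      smul_sum, zero_add, sub_zero]
  calc c * ‖∑ n ∈ Ico N M, e n‖ = ‖coordProj e E (Ico N M) (x - ∑ n ∈ A, z n • e n)‖ := by
        rw [hproj, norm_smul, Real.norm_of_nonneg hc0]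
    _ ≤ 2 * β * (K * ‖∑ n ∈ A, a n • e n‖) :=
      (hβ.norm_coordProj_Ico_le hNM _).trans (mul_le_mul_of_nonneg_left hz (by positivity))
    _ = 2 * β * K * ‖∑ n ∈ A, a n • e n‖ := by ring

end WSemiGreedy

end

theorem stmt15_general {X : Type*} [NormedAddCommGroup X] [NormedSpace ℝ X] [CompleteSpace X]
    (e : ℕ → X) (E : ℕ → X →L[ℝ] ℝ) (w : ℕ → ℝ) (K : ℝ)
    (hb : NormalizedBasis e E) (h : WSemiGreedy w e E K)
    (hlb : ∃ c : ℝ, 0 < c ∧ ∀ n, c ≤ w n) :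
    ∃ M : ℝ, ∀ (A : Finset ℕ) (a : ℕ → ℝ) (c : ℝ), 0 ≤ c →
      (∀ n ∈ A, c ≤ |a n|) →
      c * ‖∑ n ∈ A, e n‖ ≤ M * ‖∑ n ∈ A, a n • e n‖ := by
  obtain ⟨hnorm, hbio, hconv⟩ := hb
  obtain ⟨γ, hγ, hγw⟩ := hlb
  obtain ⟨β, hβ0, hβ⟩ := exists_basisConstBound hconv
  have : Nontrivial X := nontrivial_of_ne (e 0) 0 (norm_ne_zero_iff.mp (by simp [hnorm]))
  have hK := h.pos.le
  refine ⟨2 * β ^ 2 * K * (K + 1), fun A a c hc0 hc => ?_⟩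
  rcases A.eq_empty_or_nonempty with rfl | ⟨n₀, hn₀⟩
  · simp
  set s := ∑ n ∈ A, a n • e n
  obtain ⟨N, hAN⟩ := A.exists_nat_subset_range
  obtain ⟨m, hle, hlt⟩ := exists_wsum_Ico_le_and_lt hγ hγw N
    (sum_nonneg fun n _ => hγ.le.trans (hγw n))
  have hA_le_D := h.norm_sum_le_of_wsum_le hK hbio hβ hβ0 hAN (disjoint_range_Ico _ _) hlt.le
  have hD'_le := h.smul_norm_sum_Ico_le hK hbio hβ hβ0 hc0 hc hAN (N.le_add_right m) hle
  have hcoef : c ≤ 2 * β * ‖s‖ := (hc n₀ hn₀).trans <| by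
    simpa [s, coord_sum_smul hbio, hn₀] using hβ.abs_coord_le (hnorm n₀) s
  have htop : ‖∑ n ∈ Ico N (N + (m + 1)), e n‖ ≤ ‖∑ n ∈ Ico N (N + m), e n‖ + 1 := by
    rw [← add_assoc, sum_Ico_succ_top (N.le_add_right m), ← hnorm (N + m)]
    exact norm_add_le _ _
  calc c * ‖∑ n ∈ A, e n‖
      ≤ c * (β * K * ‖∑ n ∈ Ico N (N + (m + 1)), e n‖) := by gcongr
    _ ≤ c * (β * K * (‖∑ n ∈ Ico N (N + m), e n‖ + 1)) := by gcongr
    _ = β * K * (c * ‖∑ n ∈ Ico N (N + m), e n‖ + c) := by ring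
    _ ≤ β * K * (2 * β * K * ‖s‖ + 2 * β * ‖s‖) := by gcongr
    _ = 2 * β ^ 2 * K * (K + 1) * ‖s‖ := by ring

/-- if the basis is `w`-semi-greedy and `0 < inf wₙ ≤ sup wₙ < ∞`, then
`(min_{n∈A}|aₙ|)·‖∑_{n∈A} eₙ‖ ≤ M ‖∑_{n∈A} aₙ eₙ‖` for some `M`. -/
theorem stmt15 {X : Type*} [NormedAddCommGroup X] [NormedSpace ℝ X] [CompleteSpace X]
    (e : ℕ → X) (E : ℕ → X →L[ℝ] ℝ) (w : ℕ → ℝ) (K : ℝ)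
    (hb : NormalizedBasis e E) (h : WSemiGreedy w e E K)
    (hlb : ∃ c : ℝ, 0 < c ∧ ∀ n, c ≤ w n) (hub : ∃ C : ℝ, ∀ n, w n ≤ C) :
    ∃ M : ℝ, ∀ (A : Finset ℕ) (a : ℕ → ℝ) (c : ℝ), 0 ≤ c →
      (∀ n ∈ A, c ≤ |a n|) →
      c * ‖∑ n ∈ A, e n‖ ≤ M * ‖∑ n ∈ A, a n • e n‖ :=
  stmt15_general e E w K hb h hlb
end

section
/- Assume w ∈ c₀ is nonincreasing and (e_n) is a normalized D-w-democratic basis. Then for every m ∈ ℕ there exists N ∈ ℕ such that ||Σ_{n∈A} e_n|| ≤ D for every set A of cardinality m with N ≤ min A. If moreover w ∈ ℓ₁, there exists M ∈ ℕ such that ||Σ_{n∈A} e_n|| ≤ D for every finite A with M ≤ min A. -/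
/-!
Comparing with the singleton `{0}`, democracy gives `‖∑_{n∈A} eₙ‖ ≤ D` as soon as
`w(A) ≤ w₀`. Since `w` is nonincreasing, a set of `m` indices beyond `N` has weight at most
`m w_N`, which is eventually below `w₀` because `w → 0`; if `w ∈ ℓ₁`, every set beyond `M`
has weight at most the tail `∑_{k ≥ M} w_k`, which is eventually below `w₀`.
-/

open Finset Filter

lemma WDemocratic.norm_sum_le_of_wsum_le {X : Type*} [NormedAddCommGroup X]
    [NormedSpace ℝ X] {w : ℕ → ℝ} {e : ℕ → X} {D : ℝ} (hD : WDemocratic w e D) {j : ℕ}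
    (hj : ‖e j‖ = 1) {A : Finset ℕ} (hA : wsum w A ≤ w j) : ‖∑ n ∈ A, e n‖ ≤ D := by
  simpa [hj] using hD A {j} (by simpa [wsum] using hA)

lemma wsum_le_card_mul_of_antitone {w : ℕ → ℝ} (hw : Antitone w) {A : Finset ℕ} {N : ℕ}
    (hA : ∀ n ∈ A, N ≤ n) : wsum w A ≤ A.card * w N := by
  calc wsum w A ≤ ∑ _n ∈ A, w N := sum_le_sum fun n hn => hw (hA n hn)
    _ = A.card * w N := by rw [sum_const, nsmul_eq_mul]

lemma wsum_le_tsum_nat_add {w : ℕ → ℝ} (hw : ∀ i, 0 ≤ w i) (hs : Summable w)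
    {A : Finset ℕ} {M : ℕ} (hA : ∀ n ∈ A, M ≤ n) : wsum w A ≤ ∑' k, w (k + M) := by
  have hshift : wsum w A = ∑ k ∈ A.image (· - M), w (k + M) := by
    refine sum_nbij' (· - M) (· + M) (fun n hn => mem_image_of_mem _ hn) ?_ ?_ ?_ ?_
    · intro k hk
      obtain ⟨n, hn, rfl⟩ := mem_image.mp hk
      simpa [Nat.sub_add_cancel (hA n hn)] using hn
    · intro n hn
      exact Nat.sub_add_cancel (hA n hn)
    · intro k _
      exact Nat.add_sub_cancel k M
    · intro n hn
      simp [Nat.sub_add_cancel (hA n hn)]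
  rw [hshift]
  exact Summable.sum_le_tsum _ (fun k _ => hw _) ((summable_nat_add_iff M).mpr hs)

theorem stmt17_general {X : Type*} [NormedAddCommGroup X] [NormedSpace ℝ X]
    (e : ℕ → X) (E : ℕ → X →L[ℝ] ℝ) (w : ℕ → ℝ) (D : ℝ)
    (hw : ∀ i, 0 < w i) (hmono : Antitone w)
    (h0 : Filter.Tendsto w Filter.atTop (nhds 0))
    (hb : NormalizedBasis e E) (hD : WDemocratic w e D) :
    (∀ m : ℕ, ∃ N : ℕ, ∀ A : Finset ℕ, A.card = m → (∀ n ∈ A, N ≤ n) →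
        ‖∑ n ∈ A, e n‖ ≤ D) ∧
    (Summable w → ∃ M : ℕ, ∀ A : Finset ℕ, (∀ n ∈ A, M ≤ n) →
        ‖∑ n ∈ A, e n‖ ≤ D) := by
  refine ⟨fun m => ?_, fun hs => ?_⟩
  · have hlim : Tendsto (fun n => (m : ℝ) * w n) atTop (nhds 0) := by
      simpa using h0.const_mul (m : ℝ)
    obtain ⟨N, hN⟩ := (hlim.eventually_lt_const (hw 0)).exists
    refine ⟨N, fun A hcard hA => hD.norm_sum_le_of_wsum_le (hb.1 0) ?_⟩
    exact (wsum_le_card_mul_of_antitone hmono hA).trans (hcard ▸ hN.le)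
  · obtain ⟨M, hM⟩ := ((tendsto_sum_nat_add w).eventually_lt_const (hw 0)).exists
    refine ⟨M, fun A hA => hD.norm_sum_le_of_wsum_le (hb.1 0) ?_⟩
    exact (wsum_le_tsum_nat_add (fun i => (hw i).le) hs hA).trans hM.le

/-- if `w ∈ c₀` is nonincreasing and the basis is `D`-`w`-democratic, then
for every `m` there is `N` with `‖∑_{n∈A} eₙ‖ ≤ D` whenever `|A| = m` and `N ≤ min A`;
if moreover `w ∈ ℓ₁`, an `M` works for all finite `A` with `M ≤ min A`. -/
theorem stmt17 {X : Type*} [NormedAddCommGroup X] [NormedSpace ℝ X] [CompleteSpace X]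
    (e : ℕ → X) (E : ℕ → X →L[ℝ] ℝ) (w : ℕ → ℝ) (D : ℝ)
    (hw : ∀ i, 0 < w i) (hmono : Antitone w)
    (h0 : Filter.Tendsto w Filter.atTop (nhds 0))
    (hb : NormalizedBasis e E) (hD : WDemocratic w e D) :
    (∀ m : ℕ, ∃ N : ℕ, ∀ A : Finset ℕ, A.card = m → (∀ n ∈ A, N ≤ n) →
        ‖∑ n ∈ A, e n‖ ≤ D) ∧
    (Summable w → ∃ M : ℕ, ∀ A : Finset ℕ, (∀ n ∈ A, M ≤ n) →
        ‖∑ n ∈ A, e n‖ ≤ D) :=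
  stmt17_general e E w D hw hmono h0 hb hD
end

section
/- If w ∈ c₀ and (e_n) is a normalized w-almost greedy basis of a real Banach space, then (e_n) is weakly null. -/
open Finset Filter

/-! If `k ∉ A`, `w(A) ≤ w k` and `|a n| ≤ 1` on `A`, then `{k}` is a greedy set of
`x = ∑_{n ∈ A} a n • e n + e k`, and `w`-almost greediness compares `x - G(x) = ∑_{n ∈ A} a n • e n`
with `x - P_A(x) = e k`; so all these sums have norm at most `K`. Taking `a n = sign f(e n)` gives
`∑_{n ∈ A} |f(e n)| ≤ K ‖f‖`. If `|f(e n)| ≥ ε` for infinitely many `n`, then, as `w → 0`, any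
number of such `n` can be chosen with total weight below `w 0`, which contradicts that bound. -/

section WeaklyNull

variable {X : Type*} [NormedAddCommGroup X] [NormedSpace ℝ X]

lemma norm_sum_smul_le_of_wsum_le {w : ℕ → ℝ} {e : ℕ → X} {E : ℕ → X →L[ℝ] ℝ} {K : ℝ}
    (hbi : ∀ n m, E n (e m) = if n = m then (1 : ℝ) else 0) (hK : WAlmostGreedy w e E K)
    {A : Finset ℕ} {k : ℕ} (hk : k ∉ A) (hA : wsum w A ≤ w k)
    {a : ℕ → ℝ} (ha : ∀ n ∈ A, |a n| ≤ 1) :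
    ‖∑ n ∈ A, a n • e n‖ ≤ K * ‖e k‖ := by
  set x : X := ∑ n ∈ A, a n • e n + e k
  have hEx : ∀ m, E m x = (if m ∈ A then a m else 0) + if m = k then 1 else 0 := by
    intro m
    simp only [x, map_add, map_sum, map_smul, smul_eq_mul, hbi, mul_ite, mul_one, mul_zero,
      Finset.sum_ite_eq]
  have hExk : E k x = 1 := by simp [hEx, hk]
  have hExA : ∀ n ∈ A, E n x = a n := fun n hn => by
    simp [hEx, hn, show n ≠ k from fun h => hk (h ▸ hn)]
  have hgreedy : GreedySet E x {k} := by
    intro n hn m hm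
    rw [Finset.mem_singleton] at hn hm
    subst hn
    rw [hExk, hEx, if_neg hm, add_zero, abs_one]
    split_ifs with hmA
    · exact ha m hmA
    · simp
  have hwk : wsum w A ≤ wsum w {k} := by
    simpa only [wsum, Finset.sum_singleton] using hA
  have hgreedy_rest : x - ∑ n ∈ {k}, E n x • e n = ∑ n ∈ A, a n • e n := by
    rw [Finset.sum_singleton, hExk, one_smul, add_sub_cancel_right]
  have hA_rest : x - ∑ n ∈ A, E n x • e n = e k := by
    rw [Finset.sum_congr rfl fun n hn => by rw [hExA n hn], add_sub_cancel_left]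
  simpa only [hgreedy_rest, hA_rest] using hK x {k} hgreedy A hwk

lemma sum_abs_apply_le_of_wsum_le {w : ℕ → ℝ} {e : ℕ → X} {E : ℕ → X →L[ℝ] ℝ} {K : ℝ}
    (hbi : ∀ n m, E n (e m) = if n = m then (1 : ℝ) else 0) (hK : WAlmostGreedy w e E K)
    {A : Finset ℕ} {k : ℕ} (hk : k ∉ A) (hA : wsum w A ≤ w k) (f : X →L[ℝ] ℝ) :
    ∑ n ∈ A, |f (e n)| ≤ ‖f‖ * (K * ‖e k‖) := by
  have hsign : ∀ n ∈ A, |(SignType.sign (f (e n)) : ℝ)| ≤ 1 := fun n _ => by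
    cases SignType.sign (f (e n)) <;> simp
  calc ∑ n ∈ A, |f (e n)| = f (∑ n ∈ A, (SignType.sign (f (e n)) : ℝ) • e n) := by
        simp [map_sum, map_smul, sign_mul_self]
    _ ≤ ‖f‖ * ‖∑ n ∈ A, (SignType.sign (f (e n)) : ℝ) • e n‖ :=
        (le_abs_self _).trans (f.le_opNorm _)
    _ ≤ ‖f‖ * (K * ‖e k‖) := by
        gcongr
        exact norm_sum_smul_le_of_wsum_le hbi hK hk hA hsign

lemma exists_finset_card_eq_wsum_le {w : ℕ → ℝ} (hw : Tendsto w atTop (nhds 0))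
    {P : ℕ → Prop} (hP : ∃ᶠ n in atTop, P n) (k N : ℕ) {c : ℝ} (hc : 0 < c) :
    ∃ A : Finset ℕ, A.card = N ∧ (∀ n ∈ A, P n) ∧ k ∉ A ∧ wsum w A ≤ c := by
  have hsmall : ∀ᶠ n in atTop, k < n ∧ w n ≤ c / (N + 1) :=
    (eventually_gt_atTop k).and ((hw.eventually_lt_const (by positivity)).mono fun _ => le_of_lt)
  obtain ⟨A, hAsub, hAcard⟩ :=
    (Nat.frequently_atTop_iff_infinite.mp (hP.and_eventually hsmall)).exists_subset_card_eq N
  refine ⟨A, hAcard, fun n hn => (hAsub hn).1, fun hkA => (hAsub hkA).2.1.false, ?_⟩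
  calc wsum w A ≤ A.card • (c / (N + 1)) :=
        Finset.sum_le_card_nsmul _ _ _ fun n hn => (hAsub hn).2.2
    _ ≤ (N + 1) * (c / (N + 1)) := by
        rw [hAcard, nsmul_eq_mul]
        gcongr
        linarith
    _ = c := mul_div_cancel₀ _ (by positivity)

end WeaklyNull

theorem stmt19_general {X : Type*} [NormedAddCommGroup X] [NormedSpace ℝ X]
    (e : ℕ → X) (E : ℕ → X →L[ℝ] ℝ) (w : ℕ → ℝ)
    (hw : ∀ i, 0 < w i) (h0 : Filter.Tendsto w Filter.atTop (nhds 0))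
    (hb : NormalizedBasis e E) (h : ∃ K : ℝ, WAlmostGreedy w e E K) :
    ∀ f : X →L[ℝ] ℝ, Filter.Tendsto (fun n => f (e n)) Filter.atTop (nhds 0) := by
  obtain ⟨hnorm, hbi, -⟩ := hb
  obtain ⟨K, hK⟩ := h
  intro f
  refine Metric.tendsto_nhds.mpr fun ε hε => ?_
  simp only [Real.dist_0_eq_abs]
  by_contra hfreq
  simp only [not_eventually, not_lt] at hfreq
  obtain ⟨N, hN⟩ := exists_nat_gt (‖f‖ * K / ε)
  obtain ⟨A, hAcard, hAbig, h0A, hAw⟩ := exists_finset_card_eq_wsum_le h0 hfreq 0 N (hw 0)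
  have hlower : N * ε ≤ ∑ n ∈ A, |f (e n)| := by
    simpa [hAcard] using Finset.card_nsmul_le_sum A _ ε hAbig
  have hupper := sum_abs_apply_le_of_wsum_le hbi hK h0A hAw f
  rw [hnorm, mul_one] at hupper
  rw [div_lt_iff₀ hε] at hN
  linarith

/-- if `w ∈ c₀`, every normalized `w`-almost greedy basis of a real
Banach space is weakly null. -/
theorem stmt19 {X : Type*} [NormedAddCommGroup X] [NormedSpace ℝ X] [CompleteSpace X]
    (e : ℕ → X) (E : ℕ → X →L[ℝ] ℝ) (w : ℕ → ℝ)
    (hw : ∀ i, 0 < w i) (h0 : Filter.Tendsto w Filter.atTop (nhds 0))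
    (hb : NormalizedBasis e E) (h : ∃ K : ℝ, WAlmostGreedy w e E K) :
    ∀ f : X →L[ℝ] ℝ, Filter.Tendsto (fun n => f (e n)) Filter.atTop (nhds 0) :=
  stmt19_general e E w hw h0 hb h
end
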